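/- arXiv:2103.11129 — 9 statements merged into one kernel-verified Lean document; each statement's English description precedes it below -/
import Mathlib

section
/- Let S be a real m×n matrix with full column rank, let Ω be an n×n positive semidefinite real matrix, and let Σ be an m×m positive definite real matrix. Set W = S Ω Sᵀ + Σ. Then W is positive definite and the GLS and MinT projection-defining matrices coincide: S (Sᵀ W⁻¹ S)⁻¹ Sᵀ W⁻¹ = S (Sᵀ Σ⁻¹ S)⁻¹ Sᵀ Σ⁻¹ (in particular both S Ω Sᵀ + Σ and the indicated inverses exist). -/
open Matrix

/-- Conjugating a positive definite matrix by an injective map gives a positive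
definite matrix. -/
lemma posDef_transpose_mul_mul {m n : ℕ} (S : Matrix (Fin m) (Fin n) ℝ)
    (hS : Function.Injective S.mulVec) {A : Matrix (Fin m) (Fin m) ℝ} (hA : A.PosDef) :
    (Sᵀ * A * S).PosDef := by
  constructor
  · have h := (hA.posSemidef.conjTranspose_mul_mul_same S).1
    simpa [Matrix.conjTranspose_eq_transpose_of_trivial] using h
  · intro x hx
    have hSx : S.mulVec x ≠ 0 := by
      intro h
      exact hx (Finsupp.coe_eq_zero.mp (hS (a₁ := ⇑x) (a₂ := 0) (by simpa using h)))
    have key : star x ⬝ᵥ (Sᵀ * A * S) *ᵥ x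
        = star (S *ᵥ x) ⬝ᵥ A *ᵥ (S *ᵥ x) := by
      simp only [star_trivial, ← Matrix.mulVec_mulVec]
      rw [Matrix.dotProduct_mulVec, Matrix.vecMul_transpose]
    have hx' : (Finsupp.sum x fun i xi => Finsupp.sum x fun j xj =>
        star xi * (Sᵀ * A * S) i j * xj) = star ⇑x ⬝ᵥ (Sᵀ * A * S) *ᵥ ⇑x := by
      simp [dotProduct, mulVec, Finsupp.sum_fintype, Finset.mul_sum, mul_assoc]
    rw [hx', key]
    exact hA.dotProduct_mulVec_pos hSx

set_option maxHeartbeats 1000000 in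
/-- With `S` of full column rank, `Om` positive semidefinite, `Sg` positive
definite and `W = S Om Sᵀ + Sg`, the matrix `W` is positive definite, the indicated inverses
exist, and the GLS and MinT projection-defining matrices coincide. -/
theorem gls_eq_mint {m n : ℕ}
    (S : Matrix (Fin m) (Fin n) ℝ) (Om : Matrix (Fin n) (Fin n) ℝ)
    (Sg : Matrix (Fin m) (Fin m) ℝ)
    (hS : Function.Injective S.mulVec)
    (hOm : Om.PosSemidef) (hSg : Sg.PosDef)
    (W : Matrix (Fin m) (Fin m) ℝ) (hW : W = S * Om * Sᵀ + Sg) :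
    W.PosDef ∧ IsUnit (Sᵀ * W⁻¹ * S) ∧ IsUnit (Sᵀ * Sg⁻¹ * S) ∧
      S * (Sᵀ * W⁻¹ * S)⁻¹ * Sᵀ * W⁻¹ = S * (Sᵀ * Sg⁻¹ * S)⁻¹ * Sᵀ * Sg⁻¹ := by
  -- `S Ω Sᵀ` is positive semidefinite
  have hOmS : (S * Om * Sᵀ).PosSemidef := by
    have h := hOm.mul_mul_conjTranspose_same S
    simpa [Matrix.conjTranspose_eq_transpose_of_trivial] using h
  -- `W` is positive definite
  have hWpd : W.PosDef := hW ▸ Matrix.PosDef.posSemidef_add hOmS hSg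
  -- `B = Sᵀ Σ⁻¹ S` is positive definite
  have hB : (Sᵀ * Sg⁻¹ * S).PosDef := posDef_transpose_mul_mul S hS hSg.inv
  set B : Matrix (Fin n) (Fin n) ℝ := Sᵀ * Sg⁻¹ * S with hBdef
  -- the matrix `M = 1 + Ω B` is invertible
  set M : Matrix (Fin n) (Fin n) ℝ := 1 + Om * B with hMdef
  set R : Matrix (Fin n) (Fin n) ℝ := open scoped MatrixOrder in CFC.sqrt B with hRdef
  have hRR : R * R = B := open scoped MatrixOrder in CFC.sqrt_mul_sqrt_self B hB.posSemidef.nonneg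
  have hRherm : Rᵀ = R := by
    have h := open scoped MatrixOrder in (CFC.sqrt_nonneg B).posSemidef.1
    exact Matrix.IsSymm.eq (by simpa [Matrix.conjTranspose_eq_transpose_of_trivial] using h)
  have hRdet : R.det ≠ 0 := by
    intro h
    have : B.det = 0 := by rw [← hRR, Matrix.det_mul, h, mul_zero]
    exact hB.det_pos.ne' this
  have hRunit : IsUnit R := (Matrix.isUnit_iff_isUnit_det R).2 hRdet.isUnit
  -- `1 + R Ω R` is positive definite
  have hcore : (1 + R * Om * R).PosDef := by
    have h1 : (R * Om * R).PosSemidef := by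
      have h := hOm.mul_mul_conjTranspose_same R
      rw [Matrix.conjTranspose_eq_transpose_of_trivial, hRherm] at h
      exact h
    exact Matrix.PosDef.add_posSemidef Matrix.PosDef.one h1
  have hRM : R * M = (1 + R * Om * R) * R := by
    rw [hMdef, Matrix.mul_add, Matrix.add_mul, Matrix.mul_one, Matrix.one_mul, ← hRR]
    simp only [Matrix.mul_assoc]
  have hMdet : M.det ≠ 0 := by
    have hd : R.det * M.det = (1 + R * Om * R).det * R.det := by
      rw [← Matrix.det_mul, ← Matrix.det_mul, hRM]
    have h1 : (1 + R * Om * R).det ≠ 0 := hcore.det_pos.ne'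
    intro h
    rw [h, mul_zero] at hd
    exact (mul_ne_zero h1 hRdet) hd.symm
  have hMunit : IsUnit M := (Matrix.isUnit_iff_isUnit_det M).2 hMdet.isUnit
  -- key identity `W (Σ⁻¹ S) = S M`
  have hkey : W * (Sg⁻¹ * S) = S * M := by
    rw [hW, Matrix.add_mul, hMdef, Matrix.mul_add, Matrix.mul_one]
    rw [add_comm (S * Om * Sᵀ * (Sg⁻¹ * S))]
    congr 1
    · calc Sg * (Sg⁻¹ * S) = Sg * Sg⁻¹ * S := by rw [Matrix.mul_assoc]
        _ = S := by rw [Matrix.mul_nonsing_inv Sg hSg.det_pos.ne'.isUnit, Matrix.one_mul]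
    · simp only [hBdef, Matrix.mul_assoc]
  -- hence `W⁻¹ S = Σ⁻¹ S M⁻¹`
  have hWinvS : W⁻¹ * S = Sg⁻¹ * S * M⁻¹ := by
    have h1 : W⁻¹ * (W * (Sg⁻¹ * S)) * M⁻¹ = W⁻¹ * (S * M) * M⁻¹ := by rw [hkey]
    rw [← Matrix.mul_assoc W⁻¹ W, Matrix.nonsing_inv_mul W hWpd.det_pos.ne'.isUnit,
      Matrix.one_mul] at h1
    have h2 : W⁻¹ * (S * M) * M⁻¹ = W⁻¹ * S := by
      rw [Matrix.mul_assoc, Matrix.mul_assoc, Matrix.mul_nonsing_inv M hMdet.isUnit,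
        Matrix.mul_one]
    rw [← h2, ← h1]
  -- `W⁻¹` and `Σ⁻¹` are symmetric
  have hWt : Wᵀ = W := by
    have h := hWpd.isHermitian
    exact Matrix.IsSymm.eq (by simpa [Matrix.conjTranspose_eq_transpose_of_trivial] using h)
  have hSgt : Sgᵀ = Sg := by
    have h := hSg.isHermitian
    exact Matrix.IsSymm.eq (by simpa [Matrix.conjTranspose_eq_transpose_of_trivial] using h)
  have hWsymm : (W⁻¹)ᵀ = W⁻¹ := by rw [Matrix.transpose_nonsing_inv, hWt]
  have hSgsymm : (Sg⁻¹)ᵀ = Sg⁻¹ := by rw [Matrix.transpose_nonsing_inv, hSgt]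
  -- `Sᵀ W⁻¹ = (Mᵀ)⁻¹ Sᵀ Σ⁻¹`
  have hStW : Sᵀ * W⁻¹ = (Mᵀ)⁻¹ * (Sᵀ * Sg⁻¹) := by
    have h1 : Sᵀ * W⁻¹ = (W⁻¹ * S)ᵀ := by rw [Matrix.transpose_mul, hWsymm]
    rw [h1, hWinvS, Matrix.transpose_mul, Matrix.transpose_mul, Matrix.transpose_nonsing_inv,
      hSgsymm]
  have hMtdet : IsUnit Mᵀ.det := by rw [Matrix.det_transpose]; exact hMdet.isUnit
  have hMtunit : IsUnit Mᵀ := (Matrix.isUnit_iff_isUnit_det Mᵀ).2 hMtdet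
  have hMtinvunit : IsUnit (Mᵀ)⁻¹ := (Matrix.isUnit_nonsing_inv_iff).2 hMtunit
  -- `Sᵀ W⁻¹ S = (Mᵀ)⁻¹ B`
  have hStWS : Sᵀ * W⁻¹ * S = (Mᵀ)⁻¹ * B := by
    rw [hStW, hBdef]
    simp only [Matrix.mul_assoc]
  refine ⟨hWpd, ?_, hB.isUnit, ?_⟩
  · rw [hStWS]
    exact hMtinvunit.mul hB.isUnit
  · -- final computation
    have hinv : (Sᵀ * W⁻¹ * S)⁻¹ = B⁻¹ * Mᵀ := by
      rw [hStWS, Matrix.mul_inv_rev, Matrix.nonsing_inv_nonsing_inv Mᵀ hMtdet]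
    rw [hinv]
    simp only [Matrix.mul_assoc]
    congr 2
    rw [hStW, ← Matrix.mul_assoc, Matrix.mul_nonsing_inv Mᵀ hMtdet, Matrix.one_mul]
end

section
/- Let S be a real m×n matrix, U a real m×k matrix with Sᵀ U = 0, Ω an n×n real matrix, and Σ an m×m real matrix. Set W = S Ω Sᵀ + Σ. Then W U = Σ U; consequently, if Uᵀ Σ U is invertible, then Uᵀ W U = Uᵀ Σ U is invertible and for every n×m real matrix J one has J − J W U (Uᵀ W U)⁻¹ Uᵀ = J − J Σ U (Uᵀ Σ U)⁻¹ Uᵀ. -/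
open Matrix

/-- If `Sᵀ U = 0` and `W = S Om Sᵀ + Sg`, then `W U = Sg U`; consequently, if
`Uᵀ Sg U` is invertible then `Uᵀ W U = Uᵀ Sg U` is invertible, and the alternative-form MinT
and GLS mapping matrices coincide for every `J`. -/
theorem mint_gls_alternative_form {m n k : ℕ}
    (S : Matrix (Fin m) (Fin n) ℝ) (U : Matrix (Fin m) (Fin k) ℝ)
    (hSU : Sᵀ * U = 0)
    (Om : Matrix (Fin n) (Fin n) ℝ) (Sg : Matrix (Fin m) (Fin m) ℝ)
    (W : Matrix (Fin m) (Fin m) ℝ) (hW : W = S * Om * Sᵀ + Sg) :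
    W * U = Sg * U ∧
      (IsUnit (Uᵀ * Sg * U) →
        Uᵀ * W * U = Uᵀ * Sg * U ∧ IsUnit (Uᵀ * W * U) ∧
          ∀ J : Matrix (Fin n) (Fin m) ℝ,
            J - J * W * U * (Uᵀ * W * U)⁻¹ * Uᵀ = J - J * Sg * U * (Uᵀ * Sg * U)⁻¹ * Uᵀ) := by
  have hWU : W * U = Sg * U := by
    rw [hW, Matrix.add_mul, Matrix.mul_assoc (S * Om) Sᵀ U, hSU, Matrix.mul_zero, zero_add]
  refine ⟨hWU, fun hU => ?_⟩
  have hUWU : Uᵀ * W * U = Uᵀ * Sg * U := by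
    rw [Matrix.mul_assoc, hWU, Matrix.mul_assoc]
  refine ⟨hUWU, hUWU ▸ hU, fun J => ?_⟩
  rw [hUWU, Matrix.mul_assoc J W U, hWU, ← Matrix.mul_assoc J Sg U]
end

section
/- Let m = m* + n, let C be a real m*×n matrix, and define the block matrices S = [C; Iₙ] (the m×n matrix stacking C above the n×n identity), J = [0_{n×m*} | Iₙ] (n×m), and U the m×m* matrix with Uᵀ = [I_{m*} | −C]. Let W be an m×m positive definite real matrix. Then Sᵀ W⁻¹ S and Uᵀ W U are invertible and (Sᵀ W⁻¹ S)⁻¹ Sᵀ W⁻¹ = J − J W U (Uᵀ W U)⁻¹ Uᵀ. -/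
open Matrix

private lemma posDef_conj_aux {p q : Type*} [Fintype p] [Fintype q] [DecidableEq q]
    {M : Matrix p p ℝ} (hM : M.PosDef) (B : Matrix p q ℝ)
    (hB : ∀ x : q → ℝ, B *ᵥ x = 0 → x = 0) : (Bᵀ * M * B).PosDef := by
  rw [posDef_iff_dotProduct_mulVec]
  constructor
  · have : (Bᵀ * M * B)ᵀ = Bᵀ * Mᵀ * B := by
      rw [transpose_mul, transpose_mul, transpose_transpose, Matrix.mul_assoc]
    simpa [Matrix.IsHermitian, conjTranspose_eq_transpose_of_trivial, this] using
      congrArg (fun X => Bᵀ * X * B) hM.1.eq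
  · intro x hx
    have hBx : B *ᵥ x ≠ 0 := fun h => hx (hB x h)
    have := hM.dotProduct_mulVec_pos hBx
    simpa [mul_assoc, ← mulVec_mulVec, dotProduct_mulVec, vecMul_transpose,
      star_trivial] using this

/-- With `m = m* + n` (realized as the index type `Fin mstar ⊕ Fin n`),
`S = [C; Iₙ]`, `J = [0 | Iₙ]`, `Uᵀ = [I_{m*} | −C]` and `W` positive definite, the matrices
`Sᵀ W⁻¹ S` and `Uᵀ W U` are invertible and the closed-form MinT solution equals its
alternative representation. -/
theorem mint_alternative_representation {mstar n : ℕ}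
    (C : Matrix (Fin mstar) (Fin n) ℝ)
    (S : Matrix (Fin mstar ⊕ Fin n) (Fin n) ℝ) (hS : S = fromRows C 1)
    (J : Matrix (Fin n) (Fin mstar ⊕ Fin n) ℝ) (hJ : J = fromCols 0 1)
    (U : Matrix (Fin mstar ⊕ Fin n) (Fin mstar) ℝ) (hU : Uᵀ = fromCols 1 (-C))
    (W : Matrix (Fin mstar ⊕ Fin n) (Fin mstar ⊕ Fin n) ℝ) (hW : W.PosDef) :
    IsUnit (Sᵀ * W⁻¹ * S) ∧ IsUnit (Uᵀ * W * U) ∧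
      (Sᵀ * W⁻¹ * S)⁻¹ * Sᵀ * W⁻¹ = J - J * W * U * (Uᵀ * W * U)⁻¹ * Uᵀ := by
  have hUval : U = fromRows 1 (-Cᵀ) := by
    have := congrArg Matrix.transpose hU
    simpa [transpose_fromCols] using this
  -- injectivity of S and U as linear maps
  have hSinj : ∀ x : Fin n → ℝ, S *ᵥ x = 0 → x = 0 := by
    intro x hx
    funext i
    have := congrFun hx (Sum.inr i)
    simpa [hS, fromRows_mulVec] using this
  have hUinj : ∀ x : Fin mstar → ℝ, U *ᵥ x = 0 → x = 0 := by
    intro x hx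
    funext i
    have := congrFun hx (Sum.inl i)
    simpa [hUval, fromRows_mulVec] using this
  have h1 : (Sᵀ * W⁻¹ * S).PosDef := posDef_conj_aux hW.inv S hSinj
  have h2 : (Uᵀ * W * U).PosDef := posDef_conj_aux hW U hUinj
  refine ⟨h1.isUnit, h2.isUnit, ?_⟩
  -- key products
  have hUS : Uᵀ * S = 0 := by
    rw [hU, hS, fromCols_mul_fromRows]
    simp
  have hSU : Sᵀ * U = 0 := by
    have := congrArg Matrix.transpose hUS
    simpa [transpose_mul] using this
  have hJS : J * S = 1 := by
    rw [hJ, hS, fromCols_mul_fromRows]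
    simp
  have hWinvW : W⁻¹ * W = 1 := Matrix.nonsing_inv_mul W hW.det_pos.ne'.isUnit
  set A := (Sᵀ * W⁻¹ * S)⁻¹ * Sᵀ * W⁻¹ with hA
  set B := (Uᵀ * W * U)⁻¹ * Uᵀ with hB
  set Q := J - J * W * U * (Uᵀ * W * U)⁻¹ * Uᵀ with hQ
  set M := fromCols S (W * U) with hM
  have hAS : A * S = 1 := by
    have h := Matrix.nonsing_inv_mul (Sᵀ * W⁻¹ * S) h1.det_pos.ne'.isUnit
    rw [hA]
    simp only [Matrix.mul_assoc] at h ⊢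
    exact h
  have hAWU : A * (W * U) = 0 := by
    rw [hA]
    simp only [Matrix.mul_assoc]
    rw [← Matrix.mul_assoc W⁻¹ W U, hWinvW, Matrix.one_mul, hSU, Matrix.mul_zero]
  have hBS : B * S = 0 := by
    rw [hB, Matrix.mul_assoc, hUS, Matrix.mul_zero]
  have hBWU : B * (W * U) = 1 := by
    have h := Matrix.nonsing_inv_mul (Uᵀ * W * U) h2.det_pos.ne'.isUnit
    rw [hB]
    simp only [Matrix.mul_assoc] at h ⊢
    exact h
  have hNM : fromRows A B * M = 1 := by
    rw [hM, fromRows_mul_fromCols, hAS, hAWU, hBS, hBWU, fromBlocks_one]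
  have hMN : M * fromRows A B = 1 :=
    (Matrix.mul_eq_one_comm_of_equiv (Equiv.sumComm (Fin mstar) (Fin n))).mpr hNM
  have hQS : Q * S = 1 := by
    rw [hQ, Matrix.sub_mul, hJS, Matrix.mul_assoc, hUS, Matrix.mul_zero, sub_zero]
  have hQWU : Q * (W * U) = 0 := by
    have h := Matrix.nonsing_inv_mul (Uᵀ * W * U) h2.det_pos.ne'.isUnit
    have key : J * W * U * (Uᵀ * W * U)⁻¹ * Uᵀ * (W * U) = J * (W * U) := by
      simp only [Matrix.mul_assoc] at h ⊢
      rw [h, Matrix.mul_one]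
    rw [hQ, Matrix.sub_mul, key, ← Matrix.mul_assoc, sub_self]
  have hAM : A * M = Q * M := by
    rw [hM, mul_fromCols, mul_fromCols, hAS, hAWU, hQS, hQWU]
  have hfin : A * (M * fromRows A B) = Q * (M * fromRows A B) := by
    rw [← Matrix.mul_assoc, ← Matrix.mul_assoc, hAM]
  rw [hMN, Matrix.mul_one, Matrix.mul_one] at hfin
  exact hfin
end

section
/- Let S be a real m×n matrix with full column rank and let W be an m×m positive definite real matrix. Define D = S (SᵀS)⁻¹ − W⁻¹ S (Sᵀ W⁻¹ S)⁻¹. Then S Dᵀ W D Sᵀ = S (SᵀS)⁻¹ Sᵀ W S (SᵀS)⁻¹ Sᵀ − S (Sᵀ W⁻¹ S)⁻¹ Sᵀ. -/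
open Matrix

lemma posdef_sandwich {m n : ℕ} (S : Matrix (Fin m) (Fin n) ℝ)
    (hS : Function.Injective S.mulVec) (V : Matrix (Fin m) (Fin m) ℝ) (hV : V.PosDef) :
    (Sᵀ * V * S).PosDef := by
  rw [posDef_iff_dotProduct_mulVec]
  constructor
  · have h := hV.1
    rw [Matrix.IsHermitian, conjTranspose_eq_transpose_of_trivial] at h ⊢
    rw [Matrix.transpose_mul, Matrix.transpose_mul, Matrix.transpose_transpose, h,
      Matrix.mul_assoc]
  · intro x hx
    have hSx : S *ᵥ x ≠ 0 := by
      intro h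
      exact hx (hS (by simpa using h))
    have := hV.dotProduct_mulVec_pos hSx
    simpa only [star_trivial, Matrix.mul_assoc, ← Matrix.mulVec_mulVec,
      dotProduct_mulVec, Matrix.vecMul_transpose] using this

/-- With `D = S (SᵀS)⁻¹ − W⁻¹ S (Sᵀ W⁻¹ S)⁻¹`, the difference between the OLS
and MinT reconciled forecast error covariance matrices factorizes as `S Dᵀ W D Sᵀ`. -/
theorem ols_sub_mint_factorization {m n : ℕ}
    (S : Matrix (Fin m) (Fin n) ℝ) (hS : Function.Injective S.mulVec)
    (W : Matrix (Fin m) (Fin m) ℝ) (hW : W.PosDef)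
    (D : Matrix (Fin m) (Fin n) ℝ)
    (hD : D = S * (Sᵀ * S)⁻¹ - W⁻¹ * S * (Sᵀ * W⁻¹ * S)⁻¹) :
    S * Dᵀ * W * D * Sᵀ =
      S * (Sᵀ * S)⁻¹ * Sᵀ * W * S * (Sᵀ * S)⁻¹ * Sᵀ - S * (Sᵀ * W⁻¹ * S)⁻¹ * Sᵀ := by
  have hWinv : (W⁻¹).PosDef := hW.inv
  have hSWS : (Sᵀ * W⁻¹ * S).PosDef := posdef_sandwich S hS W⁻¹ hWinv
  have hSS : (Sᵀ * S).PosDef := by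
    have := posdef_sandwich S hS 1 Matrix.PosDef.one
    simpa using this
  have hWd : IsUnit W.det := hW.det_pos.ne'.isUnit
  have hSSd : IsUnit (Sᵀ * S).det := hSS.det_pos.ne'.isUnit
  have hBd : IsUnit (Sᵀ * W⁻¹ * S).det := hSWS.det_pos.ne'.isUnit
  have herm_trans : ∀ (M : Matrix (Fin m) (Fin m) ℝ), M.IsHermitian → Mᵀ = M := by
    intro M hM
    rwa [Matrix.IsHermitian, conjTranspose_eq_transpose_of_trivial] at hM
  have herm_transn : ∀ (M : Matrix (Fin n) (Fin n) ℝ), M.IsHermitian → Mᵀ = M := by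
    intro M hM
    rwa [Matrix.IsHermitian, conjTranspose_eq_transpose_of_trivial] at hM
  have hWT : (W⁻¹)ᵀ = W⁻¹ := herm_trans _ hWinv.1
  have hAT : ((Sᵀ * S)⁻¹)ᵀ = (Sᵀ * S)⁻¹ := by
    rw [Matrix.transpose_nonsing_inv, herm_transn _ hSS.1]
  have hBT : ((Sᵀ * W⁻¹ * S)⁻¹)ᵀ = (Sᵀ * W⁻¹ * S)⁻¹ := by
    rw [Matrix.transpose_nonsing_inv, herm_transn _ hSWS.1]
  have hDT : Dᵀ = (Sᵀ * S)⁻¹ * Sᵀ - (Sᵀ * W⁻¹ * S)⁻¹ * (Sᵀ * W⁻¹) := by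
    rw [hD, Matrix.transpose_sub, Matrix.transpose_mul, Matrix.transpose_mul,
      Matrix.transpose_mul, hAT, hBT, hWT, Matrix.mul_assoc]
  have key : Dᵀ * W * D =
      (Sᵀ * S)⁻¹ * (Sᵀ * (W * (S * (Sᵀ * S)⁻¹))) - (Sᵀ * W⁻¹ * S)⁻¹ := by
    rw [hDT, hD]
    simp only [Matrix.sub_mul, Matrix.mul_sub, Matrix.mul_assoc]
    have hBd' : IsUnit (Sᵀ * (W⁻¹ * S)).det := by
      rw [← Matrix.mul_assoc]; exact hBd
    rw [Matrix.mul_nonsing_inv_cancel_left W _ hWd,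
      Matrix.nonsing_inv_mul_cancel_left W _ hWd,
      ← Matrix.mul_assoc Sᵀ S ((Sᵀ * (W⁻¹ * S))⁻¹),
      Matrix.nonsing_inv_mul_cancel_left (Sᵀ * S) _ hSSd,
      ← Matrix.mul_assoc Sᵀ S ((Sᵀ * S)⁻¹),
      Matrix.mul_nonsing_inv _ hSSd, Matrix.mul_one,
      ← Matrix.mul_assoc W⁻¹ S ((Sᵀ * (W⁻¹ * S))⁻¹),
      ← Matrix.mul_assoc Sᵀ (W⁻¹ * S) ((Sᵀ * (W⁻¹ * S))⁻¹),
      Matrix.nonsing_inv_mul_cancel_left (Sᵀ * (W⁻¹ * S)) _ hBd']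
    abel
  calc S * Dᵀ * W * D * Sᵀ = S * (Dᵀ * W * D) * Sᵀ := by
        simp only [Matrix.mul_assoc]
    _ = _ := by
        rw [key]
        simp only [Matrix.mul_sub, Matrix.sub_mul, Matrix.mul_assoc]
end

section
/- Let S be a real m×n matrix with full column rank and let W be an m×m positive definite real matrix. Then trace(S (Sᵀ W⁻¹ S)⁻¹ Sᵀ) ≤ trace(S (SᵀS)⁻¹ Sᵀ W S (SᵀS)⁻¹ Sᵀ), and for every index i ∈ {1,…,m} the i-th diagonal entry satisfies (S (Sᵀ W⁻¹ S)⁻¹ Sᵀ)ᵢᵢ ≤ (S (SᵀS)⁻¹ Sᵀ W S (SᵀS)⁻¹ Sᵀ)ᵢᵢ. -/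
open Matrix

section Aux

variable {m n : ℕ}

private lemma real_conjT (A : Matrix (Fin m) (Fin n) ℝ) : Aᴴ = Aᵀ :=
  conjTranspose_eq_transpose_of_trivial A

private lemma posDef_conj {A : Matrix (Fin m) (Fin m) ℝ} (hA : A.PosDef)
    (S : Matrix (Fin m) (Fin n) ℝ) (hS : Function.Injective S.mulVec) :
    (Sᵀ * A * S).PosDef := by
  refine PosDef.of_dotProduct_mulVec_pos ?_ (fun x hx => ?_)
  · have := isHermitian_conjTranspose_mul_mul S hA.1
    rwa [real_conjT] at this
  · have hSx : S *ᵥ x ≠ 0 := fun h => hx (hS (by simpa using h))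
    have h := hA.dotProduct_mulVec_pos hSx
    have : star x ⬝ᵥ (Sᵀ * A * S) *ᵥ x = star (S *ᵥ x) ⬝ᵥ A *ᵥ (S *ᵥ x) := by
      simp only [star_trivial, ← mulVec_mulVec, dotProduct_mulVec, vecMul_transpose]
    rwa [this]

private lemma psd_diag_nonneg {A : Matrix (Fin m) (Fin m) ℝ} (h : A.PosSemidef) (i : Fin m) :
    0 ≤ A i i := by
  exact h.diag_nonneg

end Aux

/-- For `S` of full column rank and `W` positive definite, the total MSE (trace)
and each per-series MSE (diagonal entry) of the MinT-reconciled forecast error covariance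
matrix is bounded by that of the OLS-reconciled one. -/
theorem mint_trace_and_diag_le_ols {m n : ℕ}
    (S : Matrix (Fin m) (Fin n) ℝ) (hS : Function.Injective S.mulVec)
    (W : Matrix (Fin m) (Fin m) ℝ) (hW : W.PosDef) :
    (S * (Sᵀ * W⁻¹ * S)⁻¹ * Sᵀ).trace
        ≤ (S * (Sᵀ * S)⁻¹ * Sᵀ * W * S * (Sᵀ * S)⁻¹ * Sᵀ).trace ∧
      ∀ i : Fin m,
        (S * (Sᵀ * W⁻¹ * S)⁻¹ * Sᵀ) i i
          ≤ (S * (Sᵀ * S)⁻¹ * Sᵀ * W * S * (Sᵀ * S)⁻¹ * Sᵀ) i i := by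
  have hWi : W⁻¹.PosDef := hW.inv
  set K := Sᵀ * W⁻¹ * S with hKdef
  set T := Sᵀ * S with hTdef
  have hK : K.PosDef := posDef_conj hWi S hS
  have hT : T.PosDef := by
    have := posDef_conj (Matrix.PosDef.one (n := Fin m) (R := ℝ)) S hS
    rwa [Matrix.mul_one] at this
  -- symmetry facts
  have hWt : Wᵀ = W := by rw [← real_conjT]; exact hW.1
  have hWit : (W⁻¹)ᵀ = W⁻¹ := by rw [transpose_nonsing_inv, hWt]
  have hKt : Kᵀ = K := by
    rw [hKdef, transpose_mul, transpose_mul, transpose_transpose, hWit, Matrix.mul_assoc]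
  have hTt : Tᵀ = T := by rw [hTdef, transpose_mul, transpose_transpose]
  have hKit : (K⁻¹)ᵀ = K⁻¹ := by rw [transpose_nonsing_inv, hKt]
  have hTit : (T⁻¹)ᵀ = T⁻¹ := by rw [transpose_nonsing_inv, hTt]
  -- inverse cancellations
  have hKd : IsUnit K.det := (isUnit_iff_isUnit_det K).mp hK.isUnit
  have hTd : IsUnit T.det := (isUnit_iff_isUnit_det T).mp hT.isUnit
  have hWd : IsUnit W.det := (isUnit_iff_isUnit_det W).mp hW.isUnit
  have hK1 : K⁻¹ * K = 1 := nonsing_inv_mul K hKd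
  have hT1 : T⁻¹ * T = 1 := nonsing_inv_mul T hTd
  have hT2 : T * T⁻¹ = 1 := mul_nonsing_inv T hTd
  have hW2 : W * W⁻¹ = 1 := mul_nonsing_inv W hWd
  have hWi1 : W⁻¹ * W = 1 := nonsing_inv_mul W hWd
  set P := S * T⁻¹ * Sᵀ with hPdef
  set Q := S * K⁻¹ * Sᵀ with hQdef
  have hPt : Pᵀ = P := by
    rw [hPdef, transpose_mul, transpose_mul, transpose_transpose, hTit, Matrix.mul_assoc]
  have hQt : Qᵀ = Q := by
    rw [hQdef, transpose_mul, transpose_mul, transpose_transpose, hKit, Matrix.mul_assoc]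
  set M := P * W - Q with hMdef
  -- the key algebraic identity
  have hPQ : P * Q = Q := by
    rw [hPdef, hQdef]
    calc S * T⁻¹ * Sᵀ * (S * K⁻¹ * Sᵀ)
        = S * (T⁻¹ * (Sᵀ * S)) * (K⁻¹ * Sᵀ) := by
          simp only [Matrix.mul_assoc]
      _ = S * K⁻¹ * Sᵀ := by rw [← hTdef, hT1, Matrix.mul_one, Matrix.mul_assoc]
  have hQP : Q * P = Q := by
    rw [hPdef, hQdef]
    calc S * K⁻¹ * Sᵀ * (S * T⁻¹ * Sᵀ)
        = S * K⁻¹ * ((Sᵀ * S) * T⁻¹) * Sᵀ := by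
          simp only [Matrix.mul_assoc]
      _ = S * K⁻¹ * Sᵀ := by rw [← hTdef, hT2, Matrix.mul_one]
  have hQWQ : Q * W⁻¹ * Q = Q := by
    rw [hQdef]
    calc S * K⁻¹ * Sᵀ * W⁻¹ * (S * K⁻¹ * Sᵀ)
        = S * (K⁻¹ * (Sᵀ * W⁻¹ * S)) * (K⁻¹ * Sᵀ) := by
          simp only [Matrix.mul_assoc]
      _ = S * K⁻¹ * Sᵀ := by rw [← hKdef, hK1, Matrix.mul_one, Matrix.mul_assoc]
  have key : M * W⁻¹ * Mᵀ = P * W * P - Q := by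
    have hMt : Mᵀ = W * P - Q := by
      rw [hMdef, transpose_sub, transpose_mul, hWt, hPt, hQt]
    rw [hMt, hMdef]
    have e1 : (P * W - Q) * W⁻¹ = P - Q * W⁻¹ := by
      rw [Matrix.sub_mul, Matrix.mul_assoc, hW2, Matrix.mul_one]
    rw [e1, Matrix.sub_mul, Matrix.mul_sub, Matrix.mul_sub]
    have e2 : P * (W * P) = P * W * P := (Matrix.mul_assoc P W P).symm
    have e3 : Q * W⁻¹ * (W * P) = Q * P := by
      rw [Matrix.mul_assoc, ← Matrix.mul_assoc W⁻¹, hWi1, Matrix.one_mul]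
    have e4 : Q * W⁻¹ * Q = Q := hQWQ
    rw [e2, hPQ, e3, hQP, e4]
    abel
  have hPSD : (P * W * P - Q).PosSemidef := by
    rw [← key]
    have := hW.inv.posSemidef.mul_mul_conjTranspose_same M
    rwa [real_conjT] at this
  have hre : P * W * S * T⁻¹ * Sᵀ = P * W * P := by
    rw [hPdef]; simp only [Matrix.mul_assoc]
  rw [hre]
  constructor
  · have htr : 0 ≤ (P * W * P - Q).trace := by
      rw [Matrix.trace]
      exact Finset.sum_nonneg fun i _ => psd_diag_nonneg hPSD i
    rw [trace_sub] at htr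
    linarith
  · intro i
    have := psd_diag_nonneg hPSD i
    simp only [Matrix.sub_apply] at this
    linarith
end

section
/- Let S be a real m×n matrix with full column rank and let W be an m×m positive definite real matrix. Then W − S (Sᵀ W⁻¹ S)⁻¹ Sᵀ is positive semidefinite; in particular, for every index i ∈ {1,…,m}, (S (Sᵀ W⁻¹ S)⁻¹ Sᵀ)ᵢᵢ ≤ Wᵢᵢ. -/
open Matrix

/-- For `S` of full column rank and `W` positive definite,
`W − S (Sᵀ W⁻¹ S)⁻¹ Sᵀ` is positive semidefinite; in particular each diagonal entry of the
MinT-reconciled forecast error covariance matrix is bounded by that of `W`. -/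
theorem base_sub_mint_posSemidef {m n : ℕ}
    (S : Matrix (Fin m) (Fin n) ℝ) (hS : Function.Injective S.mulVec)
    (W : Matrix (Fin m) (Fin m) ℝ) (hW : W.PosDef) :
    (W - S * (Sᵀ * W⁻¹ * S)⁻¹ * Sᵀ).PosSemidef ∧
      ∀ i : Fin m, (S * (Sᵀ * W⁻¹ * S)⁻¹ * Sᵀ) i i ≤ W i i := by
  have hWinv : (W⁻¹).PosDef := hW.inv
  have hWinvT : W⁻¹ᵀ = W⁻¹ := by have h := hWinv.isHermitian; simp at h; exact h.eq
  set A := Sᵀ * W⁻¹ * S with hAdef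
  have hA : A.PosDef := by
    rw [Matrix.posDef_iff_dotProduct_mulVec]
    constructor
    · show Aᴴ = A
      simp [hAdef, Matrix.conjTranspose_mul, hWinvT, Matrix.mul_assoc]
    · intro x hx
      have hSx : S.mulVec x ≠ 0 := by
        intro h
        exact hx (hS (h.trans (S.mulVec_zero).symm))
      have := (Matrix.posDef_iff_dotProduct_mulVec.mp hWinv).2 (x := S.mulVec x) hSx
      convert this using 1
      simp only [hAdef, ← Matrix.mulVec_mulVec]
      rw [Matrix.dotProduct_mulVec, Matrix.vecMul_transpose]
      simp [Matrix.dotProduct_mulVec, star_trivial]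
  have hAH : A⁻¹ᵀ = A⁻¹ := by have h := hA.inv.isHermitian; simp at h; exact h.eq
  have hWunit : IsUnit W.det := (Matrix.isUnit_iff_isUnit_det W).mp hW.isUnit
  have hAunit : IsUnit A.det := (Matrix.isUnit_iff_isUnit_det A).mp hA.isUnit
  set X : Matrix (Fin m) (Fin m) ℝ := S * A⁻¹ * Sᵀ with hX
  set C : Matrix (Fin m) (Fin m) ℝ := 1 - X * W⁻¹ with hC
  have e1 : X * W⁻¹ * W = X := by
    rw [Matrix.mul_assoc, Matrix.nonsing_inv_mul _ hWunit, Matrix.mul_one]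
  have e2 : X * (W⁻¹ * X) = X := by
    rw [hX]
    calc S * A⁻¹ * Sᵀ * (W⁻¹ * (S * A⁻¹ * Sᵀ))
        = S * A⁻¹ * (Sᵀ * W⁻¹ * S) * (A⁻¹ * Sᵀ) := by
          simp only [Matrix.mul_assoc]
      _ = S * A⁻¹ * Sᵀ := by
          rw [← hAdef, Matrix.mul_assoc (S * A⁻¹) A, ← Matrix.mul_assoc A,
            Matrix.mul_nonsing_inv _ hAunit, Matrix.one_mul]
  have key : W - X = C * W * Cᴴ := by
    have hCH : Cᴴ = 1 - W⁻¹ * X := by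
      simp [hC, hX, Matrix.conjTranspose_sub, Matrix.conjTranspose_mul, hAH, hWinvT,
        Matrix.mul_assoc]
    rw [hCH, hC, Matrix.sub_mul, Matrix.one_mul, Matrix.sub_mul, e1, Matrix.mul_sub,
      Matrix.mul_one, Matrix.mul_sub, Matrix.mul_one, ← Matrix.mul_assoc,
      Matrix.mul_nonsing_inv _ hWunit, Matrix.one_mul, e2]
    abel
  have hPSD : (W - X).PosSemidef := by
    rw [key]
    exact hW.posSemidef.mul_mul_conjTranspose_same C
  refine ⟨hPSD, fun i => ?_⟩
  have hdiag : 0 ≤ (W - X) i i := by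
    simpa using (Matrix.posSemidef_iff_dotProduct_mulVec.mp hPSD).2 (Pi.single i 1)
  have hsub : (W - X) i i = W i i - X i i := by simp [Matrix.sub_apply]
  linarith [hsub ▸ hdiag]
end

section
/- Let V be an m×m positive definite real matrix and let U be a real m×k matrix with full column rank. Then Uᵀ V U is invertible and V⁻¹ − U (Uᵀ V U)⁻¹ Uᵀ is positive semidefinite. -/
open Matrix

/-- For `V` positive definite and `U` of full column rank, `Uᵀ V U` is
invertible and `V⁻¹ − U (Uᵀ V U)⁻¹ Uᵀ` is positive semidefinite. -/
theorem inv_sub_proj_posSemidef {m k : ℕ}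
    (V : Matrix (Fin m) (Fin m) ℝ) (hV : V.PosDef)
    (U : Matrix (Fin m) (Fin k) ℝ) (hU : Function.Injective U.mulVec) :
    IsUnit (Uᵀ * V * U) ∧ (V⁻¹ - U * (Uᵀ * V * U)⁻¹ * Uᵀ).PosSemidef := by
  have hCTU : Uᴴ = Uᵀ := conjTranspose_eq_transpose_of_trivial U
  -- `Uᵀ V U` is positive definite
  have hC : (Uᵀ * V * U).PosDef := by
    refine Matrix.PosDef.of_dotProduct_mulVec_pos ?_ (fun x hx => ?_)
    · have := isHermitian_conjTranspose_mul_mul U hV.1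
      rwa [hCTU] at this
    · have hUx : U *ᵥ x ≠ 0 := by
        intro h
        exact hx (hU (by simpa using h))
      have := hV.dotProduct_mulVec_pos hUx
      rw [← hCTU]
      simpa only [star_mulVec, dotProduct_mulVec, vecMul_vecMul] using this
  refine ⟨hC.isUnit, ?_⟩
  -- square root of V
  open scoped MatrixOrder in set A := CFC.sqrt V with hAdef
  open scoped MatrixOrder in have hA : A.PosSemidef := (CFC.sqrt_nonneg V).posSemidef
  open scoped MatrixOrder in have hAV : A * A = V := CFC.sqrt_mul_sqrt_self V hV.posSemidef.nonneg
  have hAH : Aᴴ = A := hA.1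
  have hAT : Aᵀ = A := by rw [← conjTranspose_eq_transpose_of_trivial, hAH]
  have hAunit : IsUnit A := by
    rw [Matrix.isUnit_iff_isUnit_det]
    have : A.det * A.det = V.det := by rw [← det_mul, hAV]
    have hVdet := hV.det_pos
    refine isUnit_of_mul_isUnit_left (y := A.det) ?_
    rw [this]
    exact hVdet.ne'.isUnit
  set C := Uᵀ * V * U with hCdef
  have hCunit : IsUnit C := hC.isUnit
  have hCdetunit : IsUnit C.det := (Matrix.isUnit_iff_isUnit_det C).mp hCunit
  have hCT : Cᵀ = C := by
    rw [← conjTranspose_eq_transpose_of_trivial, hC.1]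
  set W := A * U with hWdef
  have hWTW : Wᵀ * W = C := by
    rw [hWdef, transpose_mul, hAT, hCdef, ← hAV]
    simp only [Matrix.mul_assoc]
  set P := W * C⁻¹ * Wᵀ with hPdef
  have hPT : Pᵀ = P := by
    simp only [hPdef, transpose_mul, transpose_transpose, transpose_nonsing_inv, hCT,
      Matrix.mul_assoc]
  have hPP : P * P = P := by
    rw [hPdef]
    have e : (W * C⁻¹ * Wᵀ) * (W * C⁻¹ * Wᵀ) = W * C⁻¹ * (Wᵀ * W) * C⁻¹ * Wᵀ := by
      simp only [Matrix.mul_assoc]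
    rw [e, hWTW, Matrix.mul_assoc W C⁻¹ C, Matrix.nonsing_inv_mul _ hCdetunit, Matrix.mul_one]
  set M := (1 : Matrix (Fin m) (Fin m) ℝ) - P with hMdef
  have hMT : Mᵀ = M := by rw [hMdef, transpose_sub, transpose_one, hPT]
  have hMM : Mᴴ * M = M := by
    rw [conjTranspose_eq_transpose_of_trivial, hMT, hMdef]
    rw [sub_mul, mul_sub, mul_sub, hPP]
    simp
  have hMpsd : M.PosSemidef := by
    have := posSemidef_conjTranspose_mul_self M
    rwa [hMM] at this
  have key : A⁻¹ * M * (A⁻¹)ᴴ = V⁻¹ - U * C⁻¹ * Uᵀ := by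
    have hA1H : (A⁻¹)ᴴ = A⁻¹ := by
      rw [conjTranspose_nonsing_inv, hAH]
    have hAdetunit : IsUnit A.det := (Matrix.isUnit_iff_isUnit_det A).mp hAunit
    rw [hA1H, hMdef, mul_sub, sub_mul, mul_one, hPdef, hWdef, transpose_mul, hAT]
    have h1 : A⁻¹ * A⁻¹ = V⁻¹ := by
      rw [← hAV, Matrix.mul_inv_rev]
    have h2 : A⁻¹ * (A * U * C⁻¹ * (Uᵀ * A)) * A⁻¹ = U * C⁻¹ * Uᵀ := by
      have e : A⁻¹ * (A * U * C⁻¹ * (Uᵀ * A)) * A⁻¹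
          = (A⁻¹ * A) * (U * C⁻¹ * Uᵀ) * (A * A⁻¹) := by
        simp only [Matrix.mul_assoc]
      rw [e, Matrix.nonsing_inv_mul _ hAdetunit, Matrix.mul_nonsing_inv _ hAdetunit,
        Matrix.one_mul, Matrix.mul_one]
    rw [h1, h2]
  have := hMpsd.mul_mul_conjTranspose_same A⁻¹
  rwa [key] at this
end

section
/- Let V be an m×m positive definite real matrix, U a real m×k matrix with full column rank, S a real m×n matrix, and M a real n×m matrix. Define Δ = S M (U (Uᵀ V U)⁻¹ Uᵀ − V⁻¹) Mᵀ Sᵀ. Then Δ is negative semidefinite; in particular trace(Δ) ≤ 0 and every diagonal entry Δᵢᵢ ≤ 0 for i ∈ {1,…,m}. -/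
open Matrix

/-- With `V` positive definite, `U` of full column rank, and arbitrary `S`, `M`,
the matrix `Δ = S M (U (Uᵀ V U)⁻¹ Uᵀ − V⁻¹) Mᵀ Sᵀ` is negative semidefinite; in particular
its trace and all its diagonal entries are nonpositive. -/
theorem mintU_mse_diff_negSemidef {m k n : ℕ}
    (V : Matrix (Fin m) (Fin m) ℝ) (hV : V.PosDef)
    (U : Matrix (Fin m) (Fin k) ℝ) (hU : Function.Injective U.mulVec)
    (S : Matrix (Fin m) (Fin n) ℝ) (M : Matrix (Fin n) (Fin m) ℝ)
    (Δ : Matrix (Fin m) (Fin m) ℝ)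
    (hΔ : Δ = S * M * (U * (Uᵀ * V * U)⁻¹ * Uᵀ - V⁻¹) * Mᵀ * Sᵀ) :
    (-Δ).PosSemidef ∧ Δ.trace ≤ 0 ∧ ∀ i : Fin m, Δ i i ≤ 0 := by
  have hstar : ∀ {p q : ℕ} (X : Matrix (Fin p) (Fin q) ℝ), Xᴴ = Xᵀ := by
    intro p q X; ext i j; simp [conjTranspose_apply]
  set A : Matrix (Fin k) (Fin k) ℝ := Uᵀ * V * U with hAdef
  -- A is positive definite
  have hA : A.PosDef := by
    refine PosDef.of_dotProduct_mulVec_pos ?_ ?_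
    · have := isHermitian_conjTranspose_mul_mul U hV.1
      rwa [hstar] at this
    · intro x hx
      have hUx : U *ᵥ x ≠ 0 := by
        intro h
        exact hx (hU (by simpa using h))
      have h := hV.dotProduct_mulVec_pos hUx
      have heq : star x ⬝ᵥ ((Uᵀ * V * U) *ᵥ x) = star (U *ᵥ x) ⬝ᵥ (V *ᵥ (U *ᵥ x)) := by
        simp [← mulVec_mulVec, dotProduct_mulVec, vecMul_transpose]
      rw [hAdef, heq]
      exact h
  have hVdet : IsUnit V.det := (isUnit_iff_isUnit_det V).mp hV.isUnit
  have hAdet : IsUnit A.det := (isUnit_iff_isUnit_det A).mp hA.isUnit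
  have hVinv : V⁻¹ * V = 1 := nonsing_inv_mul V hVdet
  have hVinv' : V * V⁻¹ = 1 := mul_nonsing_inv V hVdet
  have hAinv : A⁻¹ * A = 1 := nonsing_inv_mul A hAdet
  set B : Matrix (Fin m) (Fin m) ℝ := U * A⁻¹ * Uᵀ with hBdef
  set C : Matrix (Fin m) (Fin m) ℝ := V⁻¹ - B with hCdef
  -- C is symmetric
  have hCherm : C.IsHermitian := by
    have h2 : B.IsHermitian := by
      have := isHermitian_mul_mul_conjTranspose U hA.inv.isHermitian
      rwa [hstar, ← hBdef] at this
    exact hV.isHermitian.inv.sub h2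
  have hBVB : B * V * B = B := by
    have h1 : B * V * B = U * (A⁻¹ * (Uᵀ * V * U) * A⁻¹) * Uᵀ := by
      rw [hBdef]; simp only [Matrix.mul_assoc]
    rw [h1, ← hAdef, Matrix.mul_assoc A⁻¹ A A⁻¹, ← Matrix.mul_assoc A⁻¹ A A⁻¹, hAinv,
      Matrix.one_mul, ← hBdef]
  have hBVV : B * V * V⁻¹ = B := by
    rw [Matrix.mul_assoc, hVinv', Matrix.mul_one]
  -- key identity : C * V * C = C
  have hkey : C * V * C = C := by
    calc C * V * C = (V⁻¹ * V - B * V) * C := by rw [hCdef, Matrix.sub_mul]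
      _ = C - (B * V * V⁻¹ - B * V * B) := by
          rw [hVinv, Matrix.sub_mul, Matrix.one_mul, hCdef, Matrix.mul_sub,
            ← Matrix.mul_assoc, ← Matrix.mul_assoc]
      _ = C := by rw [hBVB, hBVV, sub_self, sub_zero]
  have hCtr : Cᵀ = C := by
    have := hCherm; rwa [IsHermitian, hstar] at this
  -- C is positive semidefinite
  have hCpsd : C.PosSemidef := by
    have := hV.posSemidef.mul_mul_conjTranspose_same C
    rwa [hstar, hCtr, hkey] at this
  -- -Δ = (S*M) * C * (S*M)ᴴ
  have hnegΔ : -Δ = (S * M) * C * (S * M)ᴴ := by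
    rw [hΔ, conjTranspose_mul, hstar, hstar, hCdef, hBdef]
    simp only [Matrix.mul_sub, Matrix.sub_mul, Matrix.mul_assoc]
    abel
  have hpsd : (-Δ).PosSemidef := by
    rw [hnegΔ]
    exact hCpsd.mul_mul_conjTranspose_same (S * M)
  have hdiag : ∀ i : Fin m, Δ i i ≤ 0 := by
    intro i
    have := hpsd.dotProduct_mulVec_nonneg (Pi.single i 1)
    have h1 : star (Pi.single i (1:ℝ)) ⬝ᵥ ((-Δ) *ᵥ Pi.single i 1) = -Δ i i := by
      simp [mulVec_single, single_dotProduct]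
    rw [h1] at this
    linarith
  refine ⟨hpsd, ?_, hdiag⟩
  have : Δ.trace = ∑ i, Δ i i := rfl
  rw [this]
  exact Finset.sum_nonpos fun i _ => hdiag i
end

section
/- Let V be an m×m positive definite real matrix, let E₀ be an n×n real matrix, C an n×m real matrix, and S a real m×n matrix. Define f(X) = trace(S (E₀ − X Cᵀ − C Xᵀ + X V Xᵀ) Sᵀ) for n×m real matrices X, and set X* = C V⁻¹. Then for every X, f(X) − f(X*) = trace(S (X − X*) V (X − X*)ᵀ Sᵀ) ≥ 0; in particular f is minimized at X* = C V⁻¹. -/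
open Matrix

lemma posSemidef_trace_nonneg {k : ℕ} {M : Matrix (Fin k) (Fin k) ℝ}
    (hM : M.PosSemidef) : 0 ≤ M.trace := by
  have hdiag : ∀ i, 0 ≤ M i i := by
    intro i
    exact hM.diag_nonneg
  exact Finset.sum_nonneg fun i _ => hdiag i

/-- With `V` positive definite, the quadratic objective
`f(X) = trace (S (E₀ − X Cᵀ − C Xᵀ + X V Xᵀ) Sᵀ)` satisfies
`f X − f X* = trace (S (X − X*) V (X − X*)ᵀ Sᵀ) ≥ 0` for `X* = C V⁻¹`; in particular `f` is
minimized at `X* = C V⁻¹`. -/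
theorem mintU_minimizer {m n : ℕ}
    (V : Matrix (Fin m) (Fin m) ℝ) (hV : V.PosDef)
    (E0 : Matrix (Fin n) (Fin n) ℝ) (C : Matrix (Fin n) (Fin m) ℝ)
    (S : Matrix (Fin m) (Fin n) ℝ)
    (f : Matrix (Fin n) (Fin m) ℝ → ℝ)
    (hf : ∀ X, f X = (S * (E0 - X * Cᵀ - C * Xᵀ + X * V * Xᵀ) * Sᵀ).trace)
    (Xs : Matrix (Fin n) (Fin m) ℝ) (hXs : Xs = C * V⁻¹) :
    ∀ X, f X - f Xs = (S * (X - Xs) * V * (X - Xs)ᵀ * Sᵀ).trace ∧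
      0 ≤ (S * (X - Xs) * V * (X - Xs)ᵀ * Sᵀ).trace ∧ f Xs ≤ f X := by
  have hdetV : IsUnit V.det := isUnit_iff_ne_zero.mpr hV.det_pos.ne'
  have hVsymm : Vᵀ = V := by
    have h := hV.isHermitian
    simpa [Matrix.IsHermitian, Matrix.conjTranspose_eq_transpose_of_trivial] using h
  have hXsV : Xs * V = C := by
    rw [hXs, Matrix.mul_assoc, Matrix.nonsing_inv_mul V hdetV, Matrix.mul_one]
  have hVXs : V * Xsᵀ = Cᵀ := by
    have := congrArg Matrix.transpose hXsV
    rwa [Matrix.transpose_mul, hVsymm] at this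
  intro X
  have h1 : (X - Xs) * V = X * V - C := by rw [Matrix.sub_mul, hXsV]
  have key : S * (X - Xs) * V * (X - Xs)ᵀ * Sᵀ
      = S * (X * V * Xᵀ - X * Cᵀ - C * Xᵀ + C * Xsᵀ) * Sᵀ := by
    have e1 : S * (X - Xs) * V * (X - Xs)ᵀ * Sᵀ
        = S * ((X - Xs) * V * (X - Xs)ᵀ) * Sᵀ := by
      simp only [Matrix.mul_assoc]
    rw [e1, h1, Matrix.transpose_sub, Matrix.sub_mul, Matrix.mul_sub, Matrix.mul_sub,
      Matrix.mul_assoc X V Xsᵀ, hVXs]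
    simp only [Matrix.mul_sub, Matrix.sub_mul, Matrix.mul_add, Matrix.add_mul]
    abel
  have htr : (S * (Xs * Cᵀ) * Sᵀ).trace = (S * (C * Xsᵀ) * Sᵀ).trace := by
    rw [← Matrix.trace_transpose (S * (Xs * Cᵀ) * Sᵀ)]
    congr 1
    simp only [Matrix.transpose_mul, Matrix.transpose_transpose, Matrix.mul_assoc]
  have hXsVXs : Xs * V * Xsᵀ = C * Xsᵀ := by rw [hXsV]
  have hdiff : f X - f Xs = (S * (X - Xs) * V * (X - Xs)ᵀ * Sᵀ).trace := by
    rw [hf X, hf Xs, key, hXsVXs]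
    have htr' : (S * (Xs * (Cᵀ * Sᵀ))).trace = (S * (C * (Xsᵀ * Sᵀ))).trace := by
      simpa [Matrix.mul_assoc] using htr
    simp only [Matrix.mul_sub, Matrix.sub_mul, Matrix.mul_add, Matrix.add_mul,
      Matrix.trace_sub, Matrix.trace_add, Matrix.mul_assoc]
    linarith [htr']
  have hnonneg : 0 ≤ (S * (X - Xs) * V * (X - Xs)ᵀ * Sᵀ).trace := by
    have hrw : S * (X - Xs) * V * (X - Xs)ᵀ * Sᵀ
        = (S * (X - Xs)) * V * (S * (X - Xs))ᴴ := by
      rw [Matrix.conjTranspose_eq_transpose_of_trivial, Matrix.transpose_mul]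
      simp only [Matrix.mul_assoc]
    rw [hrw]
    exact posSemidef_trace_nonneg (hV.posSemidef.mul_mul_conjTranspose_same _)
  exact ⟨hdiff, hnonneg, by linarith⟩
end
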